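/- arXiv:2506.14118 — 5 statements merged into one kernel-verified Lean document; each statement's English description precedes it below -/
import Mathlib

section
/- Let Q ⊂ ℝ² be a toric diagram and let L be a lattice segment with edge vector w ∈ ℤ² \ {0}. Then the Minkowski sum Q + L is a toric diagram if and only if L contains no lattice points other than its two endpoints (equivalently, w is a primitive lattice vector) and w is not parallel to the edge vector of any edge of Q. -/
open Set Pointwise

noncomputable section

/-- We work in the plane `ℝ × ℝ`. -/
abbrev V : Type := ℝ × ℝ

/-- The embedding of the lattice `ℤ × ℤ` into the plane. -/
def toR (p : ℤ × ℤ) : V := ((p.1 : ℝ), (p.2 : ℝ))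

/-- The set of lattice points of the plane. -/
def latticePoints : Set V := Set.range toR

/-- A lattice polytope: the convex hull of a nonempty finite set of lattice points. -/
def IsLatticePolytope (P : Set V) : Prop :=
  ∃ S : Finset (ℤ × ℤ), S.Nonempty ∧ P = convexHull ℝ (toR '' ↑S)

/-- A toric diagram: a two-dimensional lattice polytope such that every lattice point on its
topological boundary is an extreme point. -/
def IsToricDiagram (P : Set V) : Prop :=
  IsLatticePolytope P ∧ (interior P).Nonempty ∧
    ∀ x ∈ frontier P, x ∈ latticePoints → x ∈ P.extremePoints ℝ

/-- A lattice segment: the convex hull of two distinct lattice points. -/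
def IsLatticeSegment (L : Set V) : Prop :=
  ∃ a b : ℤ × ℤ, a ≠ b ∧ L = segment ℝ (toR a) (toR b)

/-- A lattice triangle: the convex hull of three affinely independent lattice points. -/
def IsLatticeTriangle (T : Set V) : Prop :=
  ∃ a b c : ℤ × ℤ, AffineIndependent ℝ ![toR a, toR b, toR c] ∧
    T = convexHull ℝ {toR a, toR b, toR c}

/-- `E` is an edge of `P`: a maximal (nondegenerate) line segment contained in the
topological boundary of `P`. -/
def IsEdge (P E : Set V) : Prop :=
  (∃ a b : V, a ≠ b ∧ E = segment ℝ a b) ∧ E ⊆ frontier P ∧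
    ∀ F : Set V, (∃ a b : V, F = segment ℝ a b) → F ⊆ frontier P → E ⊆ F → F = E

/-- `v` is an edge vector of `P` (the difference of the endpoints of some edge of `P`). -/
def IsEdgeVector (P : Set V) (v : V) : Prop :=
  ∃ a b : V, a ≠ b ∧ IsEdge P (segment ℝ a b) ∧ v = b - a

/-- Two plane vectors are parallel when their cross product vanishes. -/
def Par (v w : V) : Prop := v.1 * w.2 = v.2 * w.1

/-- `P` admits a lattice maximal Minkowski decomposition: `P` is a Minkowski sum of at
least two lattice polytopes, each of which is a lattice segment or a lattice triangle. -/
def HasLatticeMaximalDecomposition (P : Set V) : Prop :=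
  ∃ (m : ℕ) (Ps : Fin (m + 1) → Set V), 1 ≤ m ∧
    P = ∑ k, Ps k ∧ ∀ k, IsLatticeSegment (Ps k) ∨ IsLatticeTriangle (Ps k)

/-- A convex polytope: the convex hull of a nonempty finite set of points. -/
def IsConvexPolytope (A : Set V) : Prop :=
  ∃ S : Finset V, S.Nonempty ∧ A = convexHull ℝ (↑S : Set V)

/-- `A` is a homothet `λ • P + t` (`λ > 0`) of `P`. -/
def IsHomothet (A P : Set V) : Prop :=
  ∃ (l : ℝ) (t : V), 0 < l ∧ A = (fun x => l • x + t) '' P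

/-- A (nondegenerate) line segment. -/
def IsSegmentSet (A : Set V) : Prop := ∃ a b : V, a ≠ b ∧ A = segment ℝ a b

/-- A triangle: the convex hull of three affinely independent points. -/
def IsTriangleSet (A : Set V) : Prop :=
  ∃ a b c : V, AffineIndependent ℝ ![a, b, c] ∧ A = convexHull ℝ {a, b, c}

/-- A convex polytope is Minkowski-indecomposable if in every Minkowski decomposition
into two convex polytopes, one of the summands is a point or a homothet of the polytope. -/
def MinkowskiIndecomposable (Q : Set V) : Prop :=
  ∀ A B : Set V, IsConvexPolytope A → IsConvexPolytope B → Q = A + B →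
    (∃ x, A = {x}) ∨ IsHomothet A Q ∨ (∃ x, B = {x}) ∨ IsHomothet B Q

/-- A parallelogram: a quadrilateral whose vertices `v₁ v₂ v₃ v₄` in cyclic order satisfy
`v₁ + v₃ = v₂ + v₄`. -/
def IsParallelogram (P : Set V) : Prop :=
  ∃ w : Fin 4 → V, Function.Injective w ∧ P.extremePoints ℝ = Set.range w ∧
    w 0 + w 2 = w 1 + w 3

/-- The Gauntlett–Martelli–Sparks–Waldram toric diagram `𝒴^{p,q}`. -/
def GMSW (p q : ℤ) : Set V :=
  convexHull ℝ (toR '' ({(0, 0), (1, 0), (p, p), (p - q - 1, p - q)} : Set (ℤ × ℤ)))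

/-- Cross product of lattice vectors. -/
def crossZ (u w : ℤ × ℤ) : ℤ := u.1 * w.2 - u.2 * w.1

/-!
Every boundary point of `Q + [a, b]` maximizes some linear functional `l ≠ 0`, and the face of
`Q + [a, b]` on which `l` is maximal is `F + G`, where `F` and `G` are the faces of `Q` and of
`[a, b]` on which `l` is maximal. If `l` is not constant on `[a, b]`, then `G` is an endpoint and
`F + G` is a translate of `F`, whose lattice points are vertices of `Q` because `Q` is a toric
diagram. If `l` is constant on `[a, b]`, then `G = [a, b]` and `F` is either a point `v`, so that
the lattice points of `F + G` are `v` plus lattice points of `[a, b]`, or an edge of `Q` parallel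
to `b - a`; then for a lattice point `q` of `F` one of `q + a`, `q + b` lies strictly inside the
segment `F + [a, b]`. In the same way a lattice point `x` strictly inside `[a, b]` gives the
non-extreme boundary lattice point `v + x`.
-/

theorem nonempty_interior_add {G : Type*} [TopologicalSpace G] [AddGroup G]
    [IsTopologicalAddGroup G] {A B : Set G} (hA : (interior A).Nonempty) (hB : B.Nonempty) :
    (interior (A + B)).Nonempty := by
  obtain ⟨x, hx⟩ := hA
  obtain ⟨y, hy⟩ := hB
  exact ⟨x + y, interior_maximal (add_subset_add_right interior_subset)
    isOpen_interior.add_right (add_mem_add hx hy)⟩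

section ExposedFaces

variable {E : Type*} [NormedAddCommGroup E] [NormedSpace ℝ E] {A B : Set E} {l : StrongDual ℝ E}

namespace ContinuousLinearMap

theorem toExposed_apply_eq {x y : E} (hx : x ∈ l.toExposed A) (hy : y ∈ l.toExposed A) :
    l x = l y :=
  le_antisymm (hy.2 x hx.1) (hx.2 y hy.1)

theorem toExposed_add (hA : (l.toExposed A).Nonempty) (hB : (l.toExposed B).Nonempty) :
    l.toExposed (A + B) = l.toExposed A + l.toExposed B := by
  obtain ⟨a₀, ha₀A, ha₀⟩ := hA
  obtain ⟨b₀, hb₀B, hb₀⟩ := hB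
  ext x
  constructor
  · rintro ⟨⟨a, ha, b, hb, rfl⟩, hmax⟩
    have h₀ := hmax (a₀ + b₀) (add_mem_add ha₀A hb₀B)
    simp only [map_add] at h₀
    have hla : l a₀ ≤ l a := by linarith [hb₀ b hb]
    have hlb : l b₀ ≤ l b := by linarith [ha₀ a ha]
    exact add_mem_add ⟨ha, fun y hy => (ha₀ y hy).trans hla⟩
      ⟨hb, fun y hy => (hb₀ y hy).trans hlb⟩
  · rintro ⟨a, ⟨ha, hamax⟩, b, ⟨hb, hbmax⟩, rfl⟩
    refine ⟨add_mem_add ha hb, ?_⟩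
    rintro _ ⟨a', ha', b', hb', rfl⟩
    simp only [map_add]
    exact add_le_add (hamax a' ha') (hbmax b' hb')

theorem toExposed_subset_frontier (hl : l ≠ 0) : l.toExposed A ⊆ frontier A := by
  rintro x ⟨hxA, hmax⟩
  refine ⟨subset_closure hxA, fun hx => hl ?_⟩
  have hloc : IsLocalMax l x :=
    Filter.mem_of_superset (mem_interior_iff_mem_nhds.1 hx) fun y hy => hmax y hy
  exact hloc.hasFDerivAt_eq_zero l.hasFDerivAt

theorem toExposed_segment_of_eq {p q : E} (h : l p = l q) :
    l.toExposed (segment ℝ p q) = segment ℝ p q := by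
  have hconst : ∀ x ∈ segment ℝ p q, l x = l p := by
    rintro _ ⟨s, t, -, -, hst, rfl⟩
    rw [map_add, map_smul, map_smul, ← h, smul_eq_mul, smul_eq_mul, ← add_mul, hst, one_mul]
  refine subset_antisymm (fun x hx => hx.1) fun x hx => ⟨hx, fun y hy => ?_⟩
  rw [hconst x hx, hconst y hy]

theorem toExposed_segment_of_lt {p q : E} (h : l q < l p) :
    l.toExposed (segment ℝ p q) = {p} := by
  have hval : ∀ θ : ℝ, l (p + θ • (q - p)) = l p - θ * (l p - l q) := fun θ => by
    simp only [map_add, map_smul, map_sub, smul_eq_mul]; ring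
  ext x
  rw [mem_singleton_iff]
  constructor
  · rintro ⟨hx, hmax⟩
    rw [segment_eq_image'] at hx
    obtain ⟨θ, hθ, rfl⟩ := hx
    have hle := hmax p (left_mem_segment ℝ p q)
    rw [hval] at hle
    have hθ0 : θ = 0 := le_antisymm (by nlinarith) hθ.1
    simp [hθ0]
  · rintro rfl
    refine ⟨left_mem_segment ℝ _ q, fun y hy => ?_⟩
    rw [segment_eq_image'] at hy
    obtain ⟨θ, hθ, rfl⟩ := hy
    rw [hval]
    nlinarith [hθ.1]

theorem toExposed_segment_eq_singleton_of_ne {p q : E} (h : l p ≠ l q) :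
    l.toExposed (segment ℝ p q) = {p} ∨ l.toExposed (segment ℝ p q) = {q} := by
  rcases h.lt_or_gt with h | h
  · exact Or.inr (segment_symm ℝ p q ▸ toExposed_segment_of_lt h)
  · exact Or.inl (toExposed_segment_of_lt h)

theorem toExposed_add_segment_of_eq {p q : E} (hA : (l.toExposed A).Nonempty)
    (h : l p = l q) : l.toExposed (A + segment ℝ p q) = l.toExposed A + segment ℝ p q := by
  have hL := toExposed_segment_of_eq h
  rw [toExposed_add hA (by rw [hL]; exact ⟨p, left_mem_segment ℝ p q⟩), hL]

end ContinuousLinearMap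

open ContinuousLinearMap

theorem isCompact_segment (p q : E) : IsCompact (segment ℝ p q) :=
  convexHull_pair (𝕜 := ℝ) p q ▸ (toFinite {p, q}).isCompact_convexHull ℝ

theorem IsCompact.toExposed_nonempty (hA : IsCompact A) (hne : A.Nonempty) (l : StrongDual ℝ E) :
    (l.toExposed A).Nonempty := by
  obtain ⟨x, hx, hmax⟩ := hA.exists_isMaxOn hne l.continuous.continuousOn
  exact ⟨x, hx, fun y hy => hmax hy⟩

theorem Convex.exists_toExposed_of_mem_frontier (hA : Convex ℝ A) (hAc : IsClosed A)
    (hAi : (interior A).Nonempty) {x : E} (hx : x ∈ frontier A) :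
    ∃ l : StrongDual ℝ E, l ≠ 0 ∧ x ∈ l.toExposed A := by
  obtain ⟨l, u, hl, hlA, hlx⟩ := geometric_hahn_banach_of_nonempty_interior hA
    (convex_singleton x) (disjoint_singleton_right.2 hx.2) hAi (singleton_nonempty x)
  exact ⟨l, hl, hAc.frontier_subset hx, fun y hy => (hlA y hy).trans (hlx x rfl)⟩

theorem left_mem_extremePoints_segment (p q : E) : p ∈ (segment ℝ p q).extremePoints ℝ := by
  rcases eq_or_ne p q with rfl | h
  · simp
  have hexposed :
      ∀ l : StrongDual ℝ E, l q < l p → p ∈ (segment ℝ p q).extremePoints ℝ :=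
    fun l hl => isExtreme_singleton.1 <|
      toExposed_segment_of_lt hl ▸ toExposed.isExposed.isExtreme
  obtain ⟨l, hl⟩ := SeparatingDual.exists_ne_zero (R := ℝ) (sub_ne_zero.2 h)
  rw [map_sub, sub_ne_zero] at hl
  rcases hl.lt_or_gt with hl | hl
  · exact hexposed (-l) (by simpa using hl)
  · exact hexposed l hl

theorem right_mem_extremePoints_segment (p q : E) : q ∈ (segment ℝ p q).extremePoints ℝ :=
  segment_symm ℝ q p ▸ left_mem_extremePoints_segment q p

theorem add_mem_extremePoints_singleton_add {s : Set E} {x : E} (t : E)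
    (hx : x ∈ s.extremePoints ℝ) : t + x ∈ ({t} + s).extremePoints ℝ := by
  rw [singleton_add]
  refine ⟨mem_image_of_mem _ hx.1, ?_⟩
  rintro _ ⟨y, hy, rfl⟩ _ ⟨z, hz, rfl⟩ h
  rw [hx.2 hy hz ((mem_openSegment_translate ℝ t).1 h)]

theorem notMem_extremePoints_of_sub_add_mem {x w : E} {s t : ℝ} (hs : 0 < s) (ht : 0 < t)
    (hw : w ≠ 0) (h₁ : x - s • w ∈ A) (h₂ : x + t • w ∈ A) :
    x ∉ A.extremePoints ℝ := by
  intro hx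
  have hseg : x ∈ openSegment ℝ (x - s • w) (x + t • w) := by
    refine ⟨t / (s + t), s / (s + t), by positivity, by positivity,
      by rw [← add_div, add_comm, div_self (by positivity)], ?_⟩
    match_scalars <;> field_simp <;> ring
  have hsw : s • w = 0 := by simpa using hx.2 h₁ h₂ hseg
  exact hw ((smul_eq_zero.1 hsw).resolve_left hs.ne')

theorem notMem_extremePoints_add_segment {q a b : E} {s : ℝ} (hs : s ≠ 0) (hab : a ≠ b)
    (hq : q ∈ A) (hqs : q + s • (b - a) ∈ A) :
    q + a ∉ (A + segment ℝ a b).extremePoints ℝ ∨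
      q + b ∉ (A + segment ℝ a b).extremePoints ℝ := by
  have hw : b - a ≠ 0 := sub_ne_zero.2 hab.symm
  rcases hs.lt_or_gt with hneg | hpos
  · refine Or.inl (notMem_extremePoints_of_sub_add_mem (neg_pos.2 hneg) one_pos hw ?_ ?_)
    · convert add_mem_add hqs (left_mem_segment ℝ a b) using 1
      module
    · convert add_mem_add hq (right_mem_segment ℝ a b) using 1
      module
  · refine Or.inr (notMem_extremePoints_of_sub_add_mem one_pos hpos hw ?_ ?_)
    · convert add_mem_add hq (left_mem_segment ℝ a b) using 1
      module
    · convert add_mem_add hqs (right_mem_segment ℝ a b) using 1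
      module

theorem IsCompact.exists_eq_segment_of_subset_line {K : Set E} (hK : IsCompact K)
    (hKc : Convex ℝ K) (hKn : K.Nontrivial) {q r : E} (hqr : q ≠ r)
    (hline : K ⊆ range (AffineMap.lineMap q r : ℝ → E)) :
    ∃ p₁ p₂, p₁ ≠ p₂ ∧ K = segment ℝ p₁ p₂ := by
  set φ : ℝ →ᵃ[ℝ] E := AffineMap.lineMap q r
  have hφ : Topology.IsClosedEmbedding φ := by
    have h := (Homeomorph.addRight q).isClosedEmbedding.comp
      (isClosedEmbedding_smul_left (𝕜 := ℝ) (sub_ne_zero.2 hqr.symm))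
    convert h using 1
    ext t
    simp [φ, AffineMap.lineMap_apply]
  set T := φ ⁻¹' K
  have hKT : φ '' T = K := image_preimage_eq_of_subset hline
  have hTne : T.Nonempty := by
    obtain ⟨x, hx⟩ := hKn.nonempty
    obtain ⟨t, rfl⟩ := hline hx
    exact ⟨t, hx⟩
  have hTIcc : T = Icc (sInf T) (sSup T) :=
    eq_Icc_of_connected_compact ⟨hTne, (hKc.affine_preimage φ).isPreconnected⟩
      (hφ.isCompact_preimage hK)
  have hlt : sInf T < sSup T := by
    by_contra! hle
    have hT : T.Subsingleton := fun x hx y hy => by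
      rw [hTIcc] at hx hy
      linarith [hx.1, hx.2, hy.1, hy.2]
    exact hKn.not_subsingleton (hKT ▸ hT.image φ)
  refine ⟨φ (sInf T), φ (sSup T), hφ.injective.ne hlt.ne, ?_⟩
  rw [← hKT, ← image_segment, segment_eq_Icc hlt.le, ← hTIcc]

end ExposedFaces

theorem Module.Dual.exists_eq_smul_of_apply_eq_zero {K E : Type*} [Field K] [AddCommGroup E]
    [Module K E] (hE : Module.finrank K E = 2) {f : Module.Dual K E} (hf : f ≠ 0) {u z : E}
    (hu : u ≠ 0) (hfu : f u = 0) (hfz : f z = 0) : ∃ t : K, z = t • u := by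
  have : FiniteDimensional K E := Module.finite_of_finrank_eq_succ hE
  have hker : Module.finrank K (LinearMap.ker f) = 1 := by
    have := Module.Dual.finrank_ker_add_one_of_ne_zero hf
    omega
  obtain ⟨t, ht⟩ := (finrank_eq_one_iff_of_nonzero' (⟨u, hfu⟩ : LinearMap.ker f)
    fun h => hu (congrArg Subtype.val h)).1 hker ⟨z, hfz⟩
  exact ⟨t, congrArg Subtype.val ht.symm⟩

section Plane

open ContinuousLinearMap

variable {l : StrongDual ℝ V} {A : Set V}

theorem exists_eq_smul_of_apply_eq_zero (hl : l ≠ 0) {u z : V} (hu : u ≠ 0) (hlu : l u = 0)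
    (hlz : l z = 0) : ∃ t : ℝ, z = t • u :=
  Module.Dual.exists_eq_smul_of_apply_eq_zero (by simp)
    (fun h => hl (ContinuousLinearMap.coe_injective h)) hu hlu hlz

def crossDual (v : V) : StrongDual ℝ V :=
  v.1 • ContinuousLinearMap.snd ℝ ℝ ℝ - v.2 • ContinuousLinearMap.fst ℝ ℝ ℝ

@[simp]
theorem crossDual_apply (v z : V) : crossDual v z = v.1 * z.2 - v.2 * z.1 := by
  simp [crossDual]

theorem crossDual_ne_zero {v : V} (hv : v ≠ 0) : crossDual v ≠ 0 := by
  intro h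
  have h₁ := crossDual_apply v ((0 : ℝ), (1 : ℝ))
  have h₂ := crossDual_apply v ((1 : ℝ), (0 : ℝ))
  simp only [h, zero_apply] at h₁ h₂
  exact hv (Prod.ext (by rw [Prod.fst_zero]; linarith) (by rw [Prod.snd_zero]; linarith))

theorem Par.exists_eq_smul {w v : V} (h : Par w v) (hv : v ≠ 0) : ∃ t : ℝ, w = t • v :=
  exists_eq_smul_of_apply_eq_zero (crossDual_ne_zero hv) hv (by rw [crossDual_apply]; ring)
    (by simp only [crossDual_apply]; linarith [show w.1 * v.2 = w.2 * v.1 from h])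

theorem par_of_apply_eq_zero (hl : l ≠ 0) {w v : V} (hw : l w = 0) (hv : l v = 0) : Par w v := by
  rcases eq_or_ne v 0 with rfl | hv0
  · simp [Par]
  obtain ⟨t, rfl⟩ := exists_eq_smul_of_apply_eq_zero hl hv0 hv hw
  simp only [Par, Prod.smul_fst, Prod.smul_snd, smul_eq_mul]
  ring

theorem isEdge_of_toExposed_eq_segment (hA : IsClosed A) (hl : l ≠ 0) {p r : V} (hpr : p ≠ r)
    (h : l.toExposed A = segment ℝ p r) : IsEdge A (segment ℝ p r) := by
  refine ⟨⟨p, r, hpr, rfl⟩, h ▸ toExposed_subset_frontier hl, ?_⟩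
  rintro _ ⟨c, d, rfl⟩ hF hsub
  have hFA : segment ℝ c d ⊆ A := hF.trans hA.frontier_subset
  have hp : p ∈ l.toExposed A := h ▸ left_mem_segment ℝ p r
  have hr : r ∈ l.toExposed A := h ▸ right_mem_segment ℝ p r
  have hmax :
      ∀ x ∈ l.toExposed A, x ∈ segment ℝ c d → x ∈ l.toExposed (segment ℝ c d) :=
    fun x hx hxF => ⟨hxF, fun y hy => hx.2 y (hFA hy)⟩
  have hpF := hmax p hp (hsub (left_mem_segment ℝ p r))
  have hrF := hmax r hr (hsub (right_mem_segment ℝ p r))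
  rcases eq_or_ne (l c) (l d) with hcd | hcd
  · refine subset_antisymm (fun x hx => ?_) hsub
    have hxF : x ∈ l.toExposed (segment ℝ c d) := (toExposed_segment_of_eq hcd).symm ▸ hx
    rw [← h]
    exact ⟨hFA hx, fun y hy => (hp.2 y hy).trans (hxF.2 p hpF.1)⟩
  · exfalso
    rcases toExposed_segment_eq_singleton_of_ne hcd with he | he <;>
    · rw [he] at hpF hrF
      exact hpr (hpF.trans hrF.symm)

theorem IsEdge.exists_toExposed (hA : Convex ℝ A) (hAc : IsClosed A) (hAi : (interior A).Nonempty)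
    {p r : V} (h : IsEdge A (segment ℝ p r)) :
    ∃ l : StrongDual ℝ V, l ≠ 0 ∧ p ∈ l.toExposed A ∧ r ∈ l.toExposed A := by
  have hsub : segment ℝ p r ⊆ A := h.2.1.trans hAc.frontier_subset
  have hm : midpoint ℝ p r ∈ openSegment ℝ p r := midpoint_mem_openSegment p r
  obtain ⟨l, hl, hml⟩ :=
    hA.exists_toExposed_of_mem_frontier hAc hAi (h.2.1 (openSegment_subset_segment ℝ p r hm))
  have hface : IsExtreme ℝ A (l.toExposed A) := toExposed.isExposed.isExtreme
  exact ⟨l, hl,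
    hface.left_mem_of_mem_openSegment (hsub (left_mem_segment ℝ p r))
      (hsub (right_mem_segment ℝ p r)) hml hm,
    hface.right_mem_of_mem_openSegment (hsub (left_mem_segment ℝ p r))
      (hsub (right_mem_segment ℝ p r)) hml hm⟩

theorem exists_isEdge_of_toExposed_nontrivial (hA : IsCompact A) (hAc : Convex ℝ A) (hl : l ≠ 0)
    (hn : (l.toExposed A).Nontrivial) :
    ∃ p r, p ≠ r ∧ IsEdge A (segment ℝ p r) ∧ l (r - p) = 0 := by
  obtain ⟨y, hy, z, hz, hyz⟩ := hn
  have hline : l.toExposed A ⊆ range (AffineMap.lineMap y z : ℝ → V) := fun x hx => by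
    obtain ⟨t, ht⟩ := exists_eq_smul_of_apply_eq_zero (z := x - y) hl (sub_ne_zero.2 hyz.symm)
      (by rw [map_sub, toExposed_apply_eq hz hy, sub_self])
      (by rw [map_sub, toExposed_apply_eq hx hy, sub_self])
    exact ⟨t, by rw [AffineMap.lineMap_apply, vsub_eq_sub, vadd_eq_add, ← ht, sub_add_cancel]⟩
  obtain ⟨p, r, hpr, hface⟩ :=
    (toExposed.isExposed.isCompact hA).exists_eq_segment_of_subset_line
      (toExposed.isExposed.convex hAc) ⟨y, hy, z, hz, hyz⟩ hyz hline
  have hp : p ∈ l.toExposed A := hface ▸ left_mem_segment ℝ p r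
  have hr : r ∈ l.toExposed A := hface ▸ right_mem_segment ℝ p r
  exact ⟨p, r, hpr, isEdge_of_toExposed_eq_segment hA.isClosed hl hpr hface,
    by rw [map_sub, toExposed_apply_eq hr hp, sub_self]⟩

theorem exists_toExposed_eq_singleton (hA : IsCompact A) (hAc : Convex ℝ A) (hne : A.Nonempty)
    (hl : l ≠ 0) {w : V} (hlw : l w = 0) (hpar : ∀ v, IsEdgeVector A v → ¬ Par w v) :
    ∃ v, l.toExposed A = {v} := by
  obtain ⟨v, hv⟩ := hA.toExposed_nonempty hne l
  rcases (l.toExposed A).subsingleton_or_nontrivial with hs | hn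
  · exact ⟨v, hs.eq_singleton_of_mem hv⟩
  · obtain ⟨p, r, hpr, hedge, hlpr⟩ := exists_isEdge_of_toExposed_nontrivial hA hAc hl hn
    exact absurd (par_of_apply_eq_zero hl hlw hlpr) (hpar _ ⟨p, r, hpr, hedge, rfl⟩)

end Plane

theorem toR_injective : Function.Injective toR := fun x y h =>
  Prod.ext (by simpa [toR] using congrArg Prod.fst h) (by simpa [toR] using congrArg Prod.snd h)

theorem toR_add (x y : ℤ × ℤ) : toR (x + y) = toR x + toR y := by
  simp [toR]

theorem add_mem_latticePoints {x y : V} (hx : x ∈ latticePoints) (hy : y ∈ latticePoints) :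
    x + y ∈ latticePoints := by
  obtain ⟨a, rfl⟩ := hx
  obtain ⟨b, rfl⟩ := hy
  exact ⟨a + b, toR_add a b⟩

theorem sub_mem_latticePoints {x y : V} (hx : x ∈ latticePoints) (hy : y ∈ latticePoints) :
    x - y ∈ latticePoints := by
  obtain ⟨a, rfl⟩ := hx
  obtain ⟨b, rfl⟩ := hy
  exact ⟨a - b, by simp [toR]⟩

namespace IsLatticePolytope

open ContinuousLinearMap

variable {P : Set V}

theorem isCompact (hP : IsLatticePolytope P) : IsCompact P := by
  obtain ⟨S, -, rfl⟩ := hP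
  exact (S.finite_toSet.image toR).isCompact_convexHull ℝ

theorem convex (hP : IsLatticePolytope P) : Convex ℝ P := by
  obtain ⟨S, -, rfl⟩ := hP
  exact convex_convexHull ℝ _

theorem nonempty (hP : IsLatticePolytope P) : P.Nonempty := by
  obtain ⟨S, hS, rfl⟩ := hP
  exact ((Finset.coe_nonempty.2 hS).image toR).convexHull

theorem extremePoints_subset_latticePoints (hP : IsLatticePolytope P) :
    P.extremePoints ℝ ⊆ latticePoints := by
  obtain ⟨S, -, rfl⟩ := hP
  exact extremePoints_convexHull_subset.trans (image_subset_range _ _)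

theorem exists_mem_toExposed_latticePoints (hP : IsLatticePolytope P) (l : StrongDual ℝ V) :
    ∃ v ∈ l.toExposed P, v ∈ latticePoints := by
  obtain ⟨v, hv⟩ := (toExposed.isExposed.isCompact hP.isCompact).extremePoints_nonempty
    (hP.isCompact.toExposed_nonempty hP.nonempty l)
  exact ⟨v, hv.1, hP.extremePoints_subset_latticePoints
    (toExposed.isExposed.isExtreme.extremePoints_subset_extremePoints hv)⟩

theorem add_segment (hP : IsLatticePolytope P) (a b : ℤ × ℤ) :
    IsLatticePolytope (P + segment ℝ (toR a) (toR b)) := by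
  classical
  obtain ⟨S, hS, rfl⟩ := hP
  refine ⟨S + {a, b}, hS.add (Finset.insert_nonempty a {b}), ?_⟩
  have himage :
      toR '' (↑S + ↑({a, b} : Finset (ℤ × ℤ))) = toR '' ↑S + {toR a, toR b} := by
    simpa [image_insert_eq] using Set.image_add (AddMonoidHom.mk' toR toR_add) (s := ↑S)
      (t := ↑({a, b} : Finset (ℤ × ℤ)))
  rw [Finset.coe_add, himage, convexHull_add, convexHull_pair]

end IsLatticePolytope

namespace IsToricDiagram

open ContinuousLinearMap

variable {Q : Set V} {a b : ℤ × ℤ}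

theorem mem_extremePoints_of_mem_toExposed {P : Set V} (hP : IsToricDiagram P)
    {l : StrongDual ℝ V} (hl : l ≠ 0) {x : V} (hx : x ∈ l.toExposed P)
    (hxl : x ∈ latticePoints) : x ∈ P.extremePoints ℝ :=
  hP.2.2 x (toExposed_subset_frontier hl hx) hxl

theorem eq_endpoint_of_add_segment (h : IsToricDiagram (Q + segment ℝ (toR a) (toR b)))
    (hQ : IsLatticePolytope Q) :
    ∀ x ∈ segment ℝ (toR a) (toR b), x ∈ latticePoints → x = toR a ∨ x = toR b := by
  intro x hx hxl
  by_contra! hne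
  set w := toR b - toR a
  have hw : w ≠ 0 := sub_ne_zero.2 fun h => hne.1 (by simpa [h] using hx)
  have hlw : crossDual w (toR a) = crossDual w (toR b) := by
    rw [← sub_eq_zero, ← map_sub, crossDual_apply]
    simp only [w, Prod.fst_sub, Prod.snd_sub]
    ring
  obtain ⟨v, hv, hvl⟩ := hQ.exists_mem_toExposed_latticePoints (crossDual w)
  obtain ⟨θ, hθ, rfl⟩ := (openSegment_eq_image' ℝ _ _).subset
    (mem_openSegment_of_ne_left_right hne.1.symm hne.2.symm hx)
  refine notMem_extremePoints_of_sub_add_mem (x := v + (toR a + θ • w)) hθ.1 (sub_pos.2 hθ.2)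
    hw ?_ ?_ (h.mem_extremePoints_of_mem_toExposed (crossDual_ne_zero hw) ?_
      (add_mem_latticePoints hvl hxl))
  · convert add_mem_add hv.1 (left_mem_segment ℝ (toR a) (toR b)) using 1
    abel
  · convert add_mem_add hv.1 (right_mem_segment ℝ (toR a) (toR b)) using 1
    simp only [w]
    module
  · rw [toExposed_add_segment_of_eq ⟨v, hv⟩ hlw]
    exact add_mem_add hv hx

theorem not_par_of_add_segment (h : IsToricDiagram (Q + segment ℝ (toR a) (toR b)))
    (hQ : IsToricDiagram Q) (hab : a ≠ b) {v : V} (hv : IsEdgeVector Q v) :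
    ¬ Par (toR b - toR a) v := by
  intro hpar
  obtain ⟨p, r, hpr, hedge, rfl⟩ := hv
  obtain ⟨hQl, hQi, -⟩ := hQ
  have hab' : toR a ≠ toR b := toR_injective.ne hab
  obtain ⟨l, hl, hp, hr⟩ := hedge.exists_toExposed hQl.convex hQl.isCompact.isClosed hQi
  obtain ⟨t, ht⟩ := hpar.exists_eq_smul (sub_ne_zero.2 hpr.symm)
  have hlw : l (toR b - toR a) = 0 := by
    rw [ht, map_smul, map_sub, toExposed_apply_eq hr hp, sub_self, smul_zero]
  obtain ⟨q, hq, hql⟩ := hQl.exists_mem_toExposed_latticePoints l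
  obtain ⟨y, hy, hyq⟩ : ∃ y ∈ l.toExposed Q, y ≠ q := by
    by_contra! hall
    exact hpr ((hall p hp).trans (hall r hr).symm)
  obtain ⟨s, hs⟩ := exists_eq_smul_of_apply_eq_zero (z := y - q) hl (sub_ne_zero.2 hab'.symm)
    hlw (by rw [map_sub, toExposed_apply_eq hy hq, sub_self])
  have hs0 : s ≠ 0 := by
    rintro rfl
    exact hyq (sub_eq_zero.1 (hs.trans (zero_smul ℝ _)))
  have hsum : l.toExposed (Q + segment ℝ (toR a) (toR b)) =
      l.toExposed Q + segment ℝ (toR a) (toR b) :=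
    toExposed_add_segment_of_eq ⟨q, hq⟩ (sub_eq_zero.1 (by rwa [← map_sub])).symm
  have hext : ∀ e ∈ segment ℝ (toR a) (toR b), e ∈ latticePoints →
      q + e ∈ (Q + segment ℝ (toR a) (toR b)).extremePoints ℝ := fun e he hel =>
    h.mem_extremePoints_of_mem_toExposed hl (hsum ▸ add_mem_add hq he)
      (add_mem_latticePoints hql hel)
  rcases notMem_extremePoints_add_segment hs0 hab' hq.1 (by rw [← hs, add_sub_cancel]; exact hy.1)
    with hn | hn
  exacts [hn (hext _ (left_mem_segment ℝ _ _) ⟨a, rfl⟩),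
    hn (hext _ (right_mem_segment ℝ _ _) ⟨b, rfl⟩)]

theorem mem_extremePoints_add_segment (hQ : IsToricDiagram Q)
    (hprim : ∀ x ∈ segment ℝ (toR a) (toR b), x ∈ latticePoints → x = toR a ∨ x = toR b)
    (hpar : ∀ v : V, IsEdgeVector Q v → ¬ Par (toR b - toR a) v) {x : V}
    (hx : x ∈ frontier (Q + segment ℝ (toR a) (toR b))) (hxl : x ∈ latticePoints) :
    x ∈ (Q + segment ℝ (toR a) (toR b)).extremePoints ℝ := by
  obtain ⟨hQl, hQi, hQt⟩ := hQ
  set L := segment ℝ (toR a) (toR b)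
  obtain ⟨l, hl, hxf⟩ := (hQl.convex.add (convex_segment _ _)).exists_toExposed_of_mem_frontier
    (hQl.isCompact.add (isCompact_segment _ _)).isClosed
    (nonempty_interior_add hQi ⟨_, left_mem_segment ℝ _ _⟩) hx
  have hsum := toExposed_add (hQl.isCompact.toExposed_nonempty hQl.nonempty l)
    ((isCompact_segment (toR a) (toR b)).toExposed_nonempty ⟨_, left_mem_segment ℝ _ _⟩ l)
  refine (toExposed.isExposed (l := l)).isExtreme.extremePoints_subset_extremePoints ?_
  rw [hsum] at hxf ⊢
  obtain ⟨q, hq, e, he, rfl⟩ := hxf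
  rcases eq_or_ne (l (toR a)) (l (toR b)) with hab | hab
  · obtain ⟨v, hv⟩ := exists_toExposed_eq_singleton hQl.isCompact hQl.convex hQl.nonempty hl
      (w := toR b - toR a) (by rw [map_sub, hab, sub_self]) hpar
    obtain ⟨v', hv', hv'l⟩ := hQl.exists_mem_toExposed_latticePoints l
    rw [hv, mem_singleton_iff] at hq hv'
    subst hq hv'
    rw [hv, toExposed_segment_of_eq hab]
    rw [toExposed_segment_of_eq hab] at he
    rcases hprim e he (by simpa using sub_mem_latticePoints hxl hv'l) with rfl | rfl
    · exact add_mem_extremePoints_singleton_add _ (left_mem_extremePoints_segment _ _)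
    · exact add_mem_extremePoints_singleton_add _ (right_mem_extremePoints_segment _ _)
  · obtain ⟨e₀, he₀l, he₀⟩ : ∃ e₀ ∈ latticePoints, l.toExposed L = {e₀} := by
      rcases toExposed_segment_eq_singleton_of_ne hab with h | h
      exacts [⟨_, ⟨a, rfl⟩, h⟩, ⟨_, ⟨b, rfl⟩, h⟩]
    rw [he₀, mem_singleton_iff] at he
    subst he
    have hql : q ∈ latticePoints := by simpa using sub_mem_latticePoints hxl he₀l
    have hqQ := hQt q (toExposed_subset_frontier hl hq) hql
    show q + e ∈ _
    rw [he₀, add_comm q e, add_comm (l.toExposed Q)]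
    exact add_mem_extremePoints_singleton_add e
      (inter_extremePoints_subset_extremePoints_of_subset (fun y hy => hy.1) ⟨hq, hqQ⟩)

theorem add_segment (hQ : IsToricDiagram Q)
    (hprim : ∀ x ∈ segment ℝ (toR a) (toR b), x ∈ latticePoints → x = toR a ∨ x = toR b)
    (hpar : ∀ v : V, IsEdgeVector Q v → ¬ Par (toR b - toR a) v) :
    IsToricDiagram (Q + segment ℝ (toR a) (toR b)) :=
  ⟨hQ.1.add_segment a b, nonempty_interior_add hQ.2.1 ⟨_, left_mem_segment ℝ _ _⟩,
    fun _ hx hxl => hQ.mem_extremePoints_add_segment hprim hpar hx hxl⟩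

end IsToricDiagram

/-- The Minkowski sum of a toric diagram `Q` and a lattice segment `L`
(with endpoints `a ≠ b` and edge vector `b - a`) is a toric diagram if and only if `L`
contains no lattice points other than its two endpoints and its edge vector is not
parallel to the edge vector of any edge of `Q`. -/
theorem statement0 (Q : Set V) (hQ : IsToricDiagram Q)
    (a b : ℤ × ℤ) (hab : a ≠ b) :
    IsToricDiagram (Q + segment ℝ (toR a) (toR b)) ↔
      ((∀ x ∈ segment ℝ (toR a) (toR b), x ∈ latticePoints → x = toR a ∨ x = toR b) ∧
        ∀ v : V, IsEdgeVector Q v → ¬ Par (toR b - toR a) v) :=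
  ⟨fun h => ⟨h.eq_endpoint_of_add_segment hQ.1, fun _ => h.not_par_of_add_segment hQ hab⟩,
    fun h => hQ.add_segment h.1 h.2⟩
end
end

section
/- For every integer s ≥ 2 and all real numbers a, b, c such that none of the quantities a, b − a, 2a − b, sa − b, a + c, −a + b + c, −(s+1)a + b + c, a − b + (s−1)c, sa − b + (s−1)c vanishes, the following identity holds: 1/((−a+b+c)(−2a+b)a) + 1/((−(s+1)a+b+c)(−a)(−sa+b)) + (s−1)²/((sa−b)(a−b+(s−1)c)·a·(1−s)) + (s−1)²/((sa−b+(s−1)c)(s−1)·a·(a−b)) + 1/((a+c)(−a+b)(2a−b)) = (−a² + 2ab − b² + (s³−s²+2)ac − 2bc + (s³−1)c²) / ((a−b−c)·((s+1)a−b−c)·(a+c)·(a−b+(s−1)c)·(sa−b+(s−1)c)). -/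
open Set Pointwise

noncomputable section

set_option maxHeartbeats 4000000 in
/-- The localization identity for the normalized volume function of the
toric Calabi–Yau cone with toric diagram `𝒫^s`. -/
theorem statement9 (s : ℤ) (hs : 2 ≤ s) (a b c : ℝ)
    (h1 : a ≠ 0) (h2 : b - a ≠ 0) (h3 : 2 * a - b ≠ 0) (h4 : (s : ℝ) * a - b ≠ 0)
    (h5 : a + c ≠ 0) (h6 : -a + b + c ≠ 0) (h7 : -((s : ℝ) + 1) * a + b + c ≠ 0)
    (h8 : a - b + ((s : ℝ) - 1) * c ≠ 0) (h9 : (s : ℝ) * a - b + ((s : ℝ) - 1) * c ≠ 0) :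
    1 / ((-a + b + c) * (-2 * a + b) * a)
      + 1 / ((-((s : ℝ) + 1) * a + b + c) * (-a) * (-(s : ℝ) * a + b))
      + ((s : ℝ) - 1) ^ 2 /
          (((s : ℝ) * a - b) * (a - b + ((s : ℝ) - 1) * c) * a * (1 - (s : ℝ)))
      + ((s : ℝ) - 1) ^ 2 /
          (((s : ℝ) * a - b + ((s : ℝ) - 1) * c) * ((s : ℝ) - 1) * a * (a - b))
      + 1 / ((a + c) * (-a + b) * (2 * a - b))
    = (-a ^ 2 + 2 * a * b - b ^ 2 + ((s : ℝ) ^ 3 - (s : ℝ) ^ 2 + 2) * a * c - 2 * b * c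
          + ((s : ℝ) ^ 3 - 1) * c ^ 2) /
        ((a - b - c) * (((s : ℝ) + 1) * a - b - c) * (a + c) * (a - b + ((s : ℝ) - 1) * c) *
          ((s : ℝ) * a - b + ((s : ℝ) - 1) * c)) := by
  have hs1 : (s : ℝ) - 1 ≠ 0 := by
    have : (2:ℝ) ≤ (s:ℝ) := by exact_mod_cast hs
    linarith
  have h2' : a - b ≠ 0 := fun h => h2 (by linarith [sub_eq_zero.mp h])
  have h3' : -2 * a + b ≠ 0 := fun h => h3 (by linarith)
  have h4' : -(s:ℝ) * a + b ≠ 0 := fun h => h4 (by linarith)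
  have h2'' : -a + b ≠ 0 := fun h => h2 (by linarith)
  have hs1' : 1 - (s:ℝ) ≠ 0 := fun h => hs1 (by linarith)
  have h6' : a - b - c ≠ 0 := fun h => h6 (by linarith)
  have h7' : ((s:ℝ)+1) * a - b - c ≠ 0 := fun h => h7 (by linarith)
  have d1 : (-a + b + c) * (-2 * a + b) * a ≠ 0 := mul_ne_zero (mul_ne_zero h6 h3') h1
  have d2 : (-((s : ℝ) + 1) * a + b + c) * (-a) * (-(s : ℝ) * a + b) ≠ 0 :=
    mul_ne_zero (mul_ne_zero h7 (neg_ne_zero.mpr h1)) h4'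
  have d3 : ((s : ℝ) * a - b) * (a - b + ((s : ℝ) - 1) * c) * a * (1 - (s : ℝ)) ≠ 0 :=
    mul_ne_zero (mul_ne_zero (mul_ne_zero h4 h8) h1) hs1'
  have d4 : ((s : ℝ) * a - b + ((s : ℝ) - 1) * c) * ((s : ℝ) - 1) * a * (a - b) ≠ 0 :=
    mul_ne_zero (mul_ne_zero (mul_ne_zero h9 hs1) h1) h2'
  have d5 : (a + c) * (-a + b) * (2 * a - b) ≠ 0 := mul_ne_zero (mul_ne_zero h5 h2'') h3
  have dr : (a - b - c) * (((s : ℝ) + 1) * a - b - c) * (a + c) * (a - b + ((s : ℝ) - 1) * c) *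
      ((s : ℝ) * a - b + ((s : ℝ) - 1) * c) ≠ 0 :=
    mul_ne_zero (mul_ne_zero (mul_ne_zero (mul_ne_zero h6' h7') h5) h8) h9
  rw [div_add_div _ _ d1 d2, div_add_div _ _ (mul_ne_zero d1 d2) d3,
    div_add_div _ _ (mul_ne_zero (mul_ne_zero d1 d2) d3) d4,
    div_add_div _ _ (mul_ne_zero (mul_ne_zero (mul_ne_zero d1 d2) d3) d4) d5,
    div_eq_div_iff (mul_ne_zero (mul_ne_zero (mul_ne_zero (mul_ne_zero d1 d2) d3) d4) d5) dr]
  ring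
end
end

section
/- Let p > q > 0 be integers and set d₁ = (1,0), d₂ = (p−1,p), d₃ = (−q−1,−q), d₄ = (−p+q+1,−p+q), regarded as vectors in ℂ². If t₁, t₂, t₃, t₄ ∈ ℂ satisfy t₁d₁ + t₂d₂ + t₃d₃ + t₄d₄ = 0 and t₁²d₁ + t₂²d₂ + t₃²d₃ + t₄²d₄ = 0, then t₁ = t₂ = t₃ = t₄. -/
open Set Pointwise

noncomputable section

/-- The common zero set in `ℂ⁴` of `g₁` and `g₂` for the oriented edge
vectors of `𝒴^{p,q}` is the diagonal: if `Σ tᵢ dᵢ = 0` and `Σ tᵢ² dᵢ = 0` then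
`t₁ = t₂ = t₃ = t₄`. -/
theorem statement14 (p q : ℤ) (hq : 0 < q) (hpq : q < p)
    (d₁ d₂ d₃ d₄ : ℂ × ℂ)
    (hd₁ : d₁ = (1, 0))
    (hd₂ : d₂ = ((p : ℂ) - 1, (p : ℂ)))
    (hd₃ : d₃ = (-(q : ℂ) - 1, -(q : ℂ)))
    (hd₄ : d₄ = (-(p : ℂ) + (q : ℂ) + 1, -(p : ℂ) + (q : ℂ)))
    (t₁ t₂ t₃ t₄ : ℂ)
    (h1 : t₁ • d₁ + t₂ • d₂ + t₃ • d₃ + t₄ • d₄ = 0)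
    (h2 : t₁ ^ 2 • d₁ + t₂ ^ 2 • d₂ + t₃ ^ 2 • d₃ + t₄ ^ 2 • d₄ = 0) :
    t₁ = t₂ ∧ t₂ = t₃ ∧ t₃ = t₄ := by
  subst hd₁ hd₂ hd₃ hd₄
  have hp : (p:ℂ) ≠ 0 := by exact_mod_cast (by omega : p ≠ 0)
  have hq' : (q:ℂ) ≠ 0 := by exact_mod_cast (by omega : q ≠ 0)
  have e1 := congrArg Prod.fst h1
  have e2 := congrArg Prod.snd h1
  have f1 := congrArg Prod.fst h2
  have f2 := congrArg Prod.snd h2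
  simp only [Prod.smul_def, Prod.mk_add_mk, Prod.fst_add, Prod.snd_add, smul_eq_mul,
    Prod.fst_zero, Prod.snd_zero] at e1 e2 f1 f2
  have key : (t₂ - t₄) * (t₃ - t₄) = 0 := by
    linear_combination (1/2 : ℂ) * f1 - (1/2 : ℂ) * f2 -
      ((t₁ + t₂ + t₃ - t₄)/2) * e1 + ((t₁ + t₂ + t₃ - t₄)/2) * e2
  rcases mul_eq_zero.mp key with h | h
  · have h24 : t₂ = t₄ := sub_eq_zero.mp h
    have h23 : t₂ = t₃ := by
      have : (q:ℂ) * (t₂ - t₃) = 0 := by linear_combination e2 - ((p:ℂ)-(q:ℂ)) * h24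
      rcases mul_eq_zero.mp this with h' | h'
      · exact absurd h' hq'
      · exact sub_eq_zero.mp h'
    refine ⟨by linear_combination e1 - ((q:ℂ)+1)*h23 - ((p:ℂ)-(q:ℂ)-1)*h24, h23, by rw [← h23, h24]⟩
  · have h34 : t₃ = t₄ := sub_eq_zero.mp h
    have h23 : t₂ = t₃ := by
      have : (p:ℂ) * (t₂ - t₃) = 0 := by linear_combination e2 + ((q:ℂ)-(p:ℂ))*h34
      rcases mul_eq_zero.mp this with h' | h'
      · exact absurd h' hp
      · exact sub_eq_zero.mp h'
    exact ⟨by linear_combination e1 - (p:ℂ)*h23 - ((p:ℂ)-(q:ℂ)-1)*h34, h23, h34⟩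
end
end

section
/- Let Ω := {(a,b) ∈ ℝ² : a + 3 > 0, 3 − a − b > 0, a − b + 3 > 0, 2b − a + 3 > 0} and define g(a,b) := 2(2a − b + 12) / ((a+3)(a+b−3)(a−b+3)(a−2b−3)) for (a,b) ∈ Ω (on Ω the denominator is nonzero and g > 0). Then g attains its minimum over Ω, the minimum value equals (46 + 13√13)/324, and it is attained precisely at the point (a,b) = (√13 − 4, 0). -/
open Set Pointwise

noncomputable section

/-- The Reeb-cone slice for the cone over `Bl_{p₁}(ℙ²)`. -/
def Omega16 : Set (ℝ × ℝ) :=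
  {x | 0 < x.1 + 3 ∧ 0 < 3 - x.1 - x.2 ∧ 0 < x.1 - x.2 + 3 ∧ 0 < 2 * x.2 - x.1 + 3}

/-- The normalized volume function for the cone over `Bl_{p₁}(ℙ²)`. -/
noncomputable def g16 (a b : ℝ) : ℝ :=
  2 * (2 * a - b + 12) / ((a + 3) * (a + b - 3) * (a - b + 3) * (a - 2 * b - 3))

lemma key16 (s a b : ℝ) (hs : s ^ 2 = 13)
    (hs0 : 0 < s)
    (h1 : 0 < a + 3) (h2 : 0 < 3 - a - b) (h3 : 0 < a - b + 3) (h4 : 0 < 2 * b - a + 3) :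
    (a + 3) * (3 - a - b) * (a - b + 3) * (2 * b - a + 3) ≤
      (2 * a - b + 12) * (104 * s - 368) ∧
    ((a + 3) * (3 - a - b) * (a - b + 3) * (2 * b - a + 3) =
      (2 * a - b + 12) * (104 * s - 368) → a = s - 4 ∧ b = 0) := by
  have hs36 : 3.4 < s := by nlinarith
  have hs37 : s < 3.65 := by nlinarith
  have h4s : 0 < 4 - s := by linarith
  -- strict quadratic inequality (concave side; max at the vertices of Ω̄)
  have hq : (a + 4 - s) ^ 2 - (a + 4 - s) * b + b ^ 2
      + 2 * (s - 4) * (2 * (a + 4 - s) - b) < 48 * s - 156 := by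
    nlinarith [mul_pos h1 h2, mul_pos h3 h4, mul_pos h4s h1, mul_pos h4s h3]
  have hrnn : 0 ≤ (a + 4 - s) ^ 2 - (a + 4 - s) * b + b ^ 2 := by
    nlinarith [sq_nonneg (2 * (a + 4 - s) - b), sq_nonneg b]
  have hM : 0 < 2 * ((8 * s - 20) - (s - 4) * (2 * (a + 4 - s) - b))
      - ((a + 4 - s) ^ 2 - (a + 4 - s) * b + b ^ 2) - 4 * (s - 4) ^ 2 := by
    nlinarith [hq]
  have e1 : 0 ≤ ((a + 4 - s) ^ 2 - (a + 4 - s) * b + b ^ 2) *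
      (2 * ((8 * s - 20) - (s - 4) * (2 * (a + 4 - s) - b))
        - ((a + 4 - s) ^ 2 - (a + 4 - s) * b + b ^ 2) - 4 * (s - 4) ^ 2) :=
    mul_nonneg hrnn hM.le
  have e2 : 0 ≤ (s - 4) ^ 2 * b ^ 2 := by positivity
  have e3 : 0 ≤ (b * (2 * a - b + 3)) ^ 2 := sq_nonneg _
  have hid : (2 * a - b + 12) * (104 * s - 368)
      - (a + 3) * (3 - a - b) * (a - b + 3) * (2 * b - a + 3) =
      ((a + 4 - s) ^ 2 - (a + 4 - s) * b + b ^ 2) *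
        (2 * ((8 * s - 20) - (s - 4) * (2 * (a + 4 - s) - b))
          - ((a + 4 - s) ^ 2 - (a + 4 - s) * b + b ^ 2) - 4 * (s - 4) ^ 2)
      + 3 * ((s - 4) ^ 2 * b ^ 2) + (b * (2 * a - b + 3)) ^ 2 := by
    linear_combination (s ^ 2 - 32 * s - 2 * a ^ 2 + 2 * a * b - 2 * b ^ 2
      + 32 * a - 16 * b + 277) * hs
  constructor
  · linarith
  · intro heq
    have hsum : ((a + 4 - s) ^ 2 - (a + 4 - s) * b + b ^ 2) *
        (2 * ((8 * s - 20) - (s - 4) * (2 * (a + 4 - s) - b))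
          - ((a + 4 - s) ^ 2 - (a + 4 - s) * b + b ^ 2) - 4 * (s - 4) ^ 2)
        + 3 * ((s - 4) ^ 2 * b ^ 2) + (b * (2 * a - b + 3)) ^ 2 = 0 := by linarith
    have hz2 : (s - 4) ^ 2 * b ^ 2 = 0 := by linarith
    have hb : b = 0 := by
      have : b ^ 2 = 0 := by
        rcases mul_eq_zero.mp hz2 with h | h
        · exfalso; nlinarith [h]
        · exact h
      exact pow_eq_zero_iff (n := 2) (by norm_num) |>.mp this
    subst hb
    have hz1 : ((a + 4 - s) ^ 2 - (a + 4 - s) * 0 + 0 ^ 2) *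
        (2 * ((8 * s - 20) - (s - 4) * (2 * (a + 4 - s) - 0))
          - ((a + 4 - s) ^ 2 - (a + 4 - s) * 0 + 0 ^ 2) - 4 * (s - 4) ^ 2) = 0 := by
      nlinarith [hsum]
    rcases mul_eq_zero.mp hz1 with h | h
    · have : (a + 4 - s) ^ 2 = 0 := by linarith [h]
      have := pow_eq_zero_iff (n := 2) (by norm_num) |>.mp this
      constructor <;> linarith
    · exfalso; linarith [hM]

/-- On `Ω` the denominator of `g` is nonzero and `g > 0`; `g` attains its
minimum over `Ω`, the minimum value is `(46 + 13√13)/324`, attained precisely at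
`(√13 − 4, 0)`. -/
theorem statement16 :
    (∀ x ∈ Omega16,
      (x.1 + 3) * (x.1 + x.2 - 3) * (x.1 - x.2 + 3) * (x.1 - 2 * x.2 - 3) ≠ 0 ∧
        0 < g16 x.1 x.2) ∧
    (Real.sqrt 13 - 4, (0 : ℝ)) ∈ Omega16 ∧
    (∀ x ∈ Omega16, g16 (Real.sqrt 13 - 4) 0 ≤ g16 x.1 x.2) ∧
    g16 (Real.sqrt 13 - 4) 0 = (46 + 13 * Real.sqrt 13) / 324 ∧
    (∀ x ∈ Omega16, g16 x.1 x.2 = (46 + 13 * Real.sqrt 13) / 324 →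
      x = (Real.sqrt 13 - 4, 0)) := by
  set s : ℝ := Real.sqrt 13 with hsdef
  have hs : s ^ 2 = 13 := Real.sq_sqrt (by norm_num)
  have hs0 : 0 < s := Real.sqrt_pos.mpr (by norm_num)
  have hs36 : 3.4 < s := by nlinarith
  have hs37 : s < 3.65 := by nlinarith
  -- generic facts about the denominator on Ω
  have hden : ∀ x : ℝ × ℝ, x ∈ Omega16 →
      0 < (x.1 + 3) * (x.1 + x.2 - 3) * (x.1 - x.2 + 3) * (x.1 - 2 * x.2 - 3) := by
    rintro ⟨a, b⟩ ⟨h1, h2, h3, h4⟩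
    have : (a + 3) * (a + b - 3) * (a - b + 3) * (a - 2 * b - 3)
        = ((a + 3) * (3 - a - b)) * ((a - b + 3) * (2 * b - a + 3)) := by ring
    rw [this]
    exact mul_pos (mul_pos h1 h2) (mul_pos h3 h4)
  have hnum : ∀ x : ℝ × ℝ, x ∈ Omega16 → 0 < 2 * (2 * x.1 - x.2 + 12) := by
    rintro ⟨a, b⟩ ⟨h1, h2, h3, h4⟩
    dsimp only at *
    linarith
  -- value at the minimizer
  have hdenval : ((s - 4) + 3) * ((s - 4) + 0 - 3) * ((s - 4) - 0 + 3) * ((s - 4) - 2 * 0 - 3)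
      = 1232 - 320 * s := by linear_combination (s ^ 2 - 16 * s + 91) * hs
  have hdenpos : (0 : ℝ) < 1232 - 320 * s := by linarith
  have hval : g16 (s - 4) 0 = (46 + 13 * s) / 324 := by
    unfold g16
    rw [hdenval, div_eq_div_iff (by positivity) (by norm_num)]
    linear_combination (4160 : ℝ) * hs
  have hmem : (s - 4, (0 : ℝ)) ∈ Omega16 := by
    simp only [Omega16, Set.mem_setOf_eq]
    refine ⟨by linarith, by linarith, by linarith, by linarith⟩
  refine ⟨?_, hmem, ?_, ?_, ?_⟩
  · rintro x hx
    exact ⟨(hden x hx).ne', div_pos (hnum x hx) (hden x hx)⟩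
  · rintro ⟨a, b⟩ hx
    have hD := hden _ hx
    have hN := hnum _ hx
    obtain ⟨h1, h2, h3, h4⟩ := hx
    dsimp only at h1 h2 h3 h4 hD hN
    rw [hval]
    unfold g16
    rw [div_le_div_iff₀ (by norm_num) hD]
    have hkey := (key16 s a b hs hs0 h1 h2 h3 h4).1
    nlinarith [hkey, hN]
  · rw [hval]
  · rintro ⟨a, b⟩ hx hgx
    have hD := hden _ hx
    obtain ⟨h1, h2, h3, h4⟩ := hx
    dsimp only at h1 h2 h3 h4 hD
    unfold g16 at hgx
    rw [div_eq_div_iff hD.ne' (by norm_num)] at hgx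
    have heq : (a + 3) * (3 - a - b) * (a - b + 3) * (2 * b - a + 3)
        = (2 * a - b + 12) * (104 * s - 368) := by
      have hkey := (key16 s a b hs hs0 h1 h2 h3 h4).1
      nlinarith [hgx, hkey]
    obtain ⟨ha, hb⟩ := (key16 s a b hs hs0 h1 h2 h3 h4).2 heq
    simp [Prod.ext_iff, ha, hb]
end
end

section
/- The square Q₁ := conv{(1,0),(0,1),(−1,0),(0,−1)} ⊂ ℝ² satisfies Q₁ = conv{(0,0),(1,1)} + conv{(0,−1),(−1,0)} (Minkowski sum), and, up to translating the summands and reordering them, this is the unique Minkowski decomposition of Q₁ into lattice polytopes none of which is a single point. -/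
open Set Pointwise

noncomputable section

/-- The square `Q₁ = conv{(1,0),(0,1),(−1,0),(0,−1)}`. -/
def sq18 : Set V :=
  convexHull ℝ {((1 : ℝ), (0 : ℝ)), ((0 : ℝ), (1 : ℝ)), ((-1 : ℝ), (0 : ℝ)),
    ((0 : ℝ), (-1 : ℝ))}

/-- The summand `conv{(0,0),(1,1)}`. -/
def seg18a : Set V := segment ℝ ((0 : ℝ), (0 : ℝ)) ((1 : ℝ), (1 : ℝ))

/-- The summand `conv{(0,−1),(−1,0)}`. -/
def seg18b : Set V := segment ℝ ((0 : ℝ), (-1 : ℝ)) ((-1 : ℝ), (0 : ℝ))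

/-!
Let `u = x + y` and `v = x - y`. Support functions, lattice widths and faces of finite sets of
lattice points are additive under Minkowski sums, and `Q₁` has `u`-width and `v`-width `2`.
The `u`-maximal edge of `Q₁` already has `v`-width `2`, so in every decomposition each summand's
`u`-maximal face is as `v`-wide as the summand; all lattice points of that face have the same `u`,
and `u ≡ v (mod 2)` on `ℤ²`, so every summand has even `v`-width, and symmetrically even
`u`-width. A summand that is not a point therefore has total width at least `2`, which leaves
exactly two summands, of widths `(2, 0)` and `(0, 2)`: unit lattice segments in the directions
`(1, 1)` and `(1, -1)`.
-/

section SupportFunction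

variable {G ι : Type*} [AddCommMonoid G]

/-- The support function of `S` at `g` (junk value `0` for `S = ∅`). -/
def supportFn (g : G →+ ℤ) (S : Finset G) : ℤ := sSup (g '' S)

def face (g : G →+ ℤ) (S : Finset G) : Finset G := S.filter fun p => g p = supportFn g S

def width (g : G →+ ℤ) (S : Finset G) : ℤ := supportFn g S + supportFn (-g) S

variable (g : G →+ ℤ) {S A B : Finset G}

theorem isGreatest_supportFn (hS : S.Nonempty) : IsGreatest (g '' S) (supportFn g S) := by
  obtain ⟨p, hp, hmax⟩ := S.exists_max_image g hS
  have hgp : IsGreatest (g '' S) (g p) :=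
    ⟨Set.mem_image_of_mem g hp, by rintro _ ⟨q, hq, rfl⟩; exact hmax q hq⟩
  rwa [supportFn, hgp.csSup_eq]

theorem le_supportFn {p : G} (hp : p ∈ S) : g p ≤ supportFn g S :=
  (isGreatest_supportFn g ⟨p, hp⟩).2 (Set.mem_image_of_mem g hp)

theorem supportFn_le {M : ℤ} (hS : S.Nonempty) (h : ∀ p ∈ S, g p ≤ M) : supportFn g S ≤ M := by
  obtain ⟨p, hp, hpS⟩ := (isGreatest_supportFn g hS).1
  exact hpS ▸ h p hp

theorem exists_eq_supportFn (hS : S.Nonempty) : ∃ p ∈ S, g p = supportFn g S :=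
  (isGreatest_supportFn g hS).1

theorem supportFn_zero : supportFn g 0 = 0 := by
  simp [supportFn]

theorem supportFn_mono (hA : A.Nonempty) (hAB : A ⊆ B) : supportFn g A ≤ supportFn g B :=
  supportFn_le g hA fun _ hp => le_supportFn g (hAB hp)

theorem face_subset : face g S ⊆ S := Finset.filter_subset _ _

theorem mem_face {p : G} : p ∈ face g S ↔ p ∈ S ∧ g p = supportFn g S := Finset.mem_filter

theorem face_nonempty (hS : S.Nonempty) : (face g S).Nonempty := by
  obtain ⟨p, hp, hpS⟩ := exists_eq_supportFn g hS
  exact ⟨p, (mem_face g).2 ⟨hp, hpS⟩⟩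

theorem width_nonneg (hS : S.Nonempty) : 0 ≤ width g S := by
  obtain ⟨p, hp⟩ := hS
  have := le_supportFn g hp
  have := le_supportFn (-g) hp
  simp only [width, AddMonoidHom.neg_apply] at *
  omega

theorem sub_le_width {p q : G} (hp : p ∈ S) (hq : q ∈ S) : g p - g q ≤ width g S := by
  have := le_supportFn g hp
  have := le_supportFn (-g) hq
  simp only [width, AddMonoidHom.neg_apply] at *
  omega

theorem width_mono (hA : A.Nonempty) (hAB : A ⊆ B) : width g A ≤ width g B :=
  add_le_add (supportFn_mono g hA hAB) (supportFn_mono (-g) hA hAB)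

variable [DecidableEq G]

theorem supportFn_add (hA : A.Nonempty) (hB : B.Nonempty) :
    supportFn g (A + B) = supportFn g A + supportFn g B := by
  have h := (isGreatest_supportFn g hA).image2 (f := fun a b : ℤ => a + b)
    (fun _ => add_left_mono) (fun _ => add_right_mono) (isGreatest_supportFn g hB)
  rw [Set.image2_add, ← Set.image_add, ← Finset.coe_add] at h
  exact h.csSup_eq

theorem sum_nonempty {s : Finset ι} {S : ι → Finset G} (hS : ∀ k ∈ s, (S k).Nonempty) :
    (∑ k ∈ s, S k).Nonempty := by
  induction s using Finset.cons_induction with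
  | empty => exact ⟨0, by simp⟩
  | cons a s has ih =>
    rw [Finset.sum_cons]
    exact (hS a (Finset.mem_cons_self a s)).add (ih fun k hk => hS k (Finset.mem_cons_of_mem hk))

theorem supportFn_sum {s : Finset ι} {S : ι → Finset G} (hS : ∀ k ∈ s, (S k).Nonempty) :
    supportFn g (∑ k ∈ s, S k) = ∑ k ∈ s, supportFn g (S k) := by
  induction s using Finset.cons_induction with
  | empty => exact supportFn_zero g
  | cons a s has ih =>
    have hs : ∀ k ∈ s, (S k).Nonempty := fun k hk => hS k (Finset.mem_cons_of_mem hk)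
    rw [Finset.sum_cons, Finset.sum_cons, supportFn_add g (hS a (Finset.mem_cons_self a s))
      (sum_nonempty hs), ih hs]

theorem face_add (hA : A.Nonempty) (hB : B.Nonempty) : face g (A + B) = face g A + face g B := by
  ext p
  simp only [mem_face, Finset.mem_add, supportFn_add g hA hB]
  constructor
  · rintro ⟨⟨a, ha, b, hb, rfl⟩, hab⟩
    have := le_supportFn g ha
    have := le_supportFn g hb
    rw [map_add] at hab
    exact ⟨a, ⟨ha, by omega⟩, b, ⟨hb, by omega⟩, rfl⟩
  · rintro ⟨a, ⟨ha, hga⟩, b, ⟨hb, hgb⟩, rfl⟩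
    exact ⟨⟨a, ha, b, hb, rfl⟩, by rw [map_add, hga, hgb]⟩

theorem face_sum {s : Finset ι} {S : ι → Finset G} (hS : ∀ k ∈ s, (S k).Nonempty) :
    face g (∑ k ∈ s, S k) = ∑ k ∈ s, face g (S k) := by
  induction s using Finset.cons_induction with
  | empty =>
    ext p
    simp +contextual [mem_face, supportFn_zero]
  | cons a s has ih =>
    have hs : ∀ k ∈ s, (S k).Nonempty := fun k hk => hS k (Finset.mem_cons_of_mem hk)
    rw [Finset.sum_cons, Finset.sum_cons, face_add g (hS a (Finset.mem_cons_self a s))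
      (sum_nonempty hs), ih hs]

theorem width_sum {s : Finset ι} {S : ι → Finset G} (hS : ∀ k ∈ s, (S k).Nonempty) :
    width g (∑ k ∈ s, S k) = ∑ k ∈ s, width g (S k) := by
  rw [width, supportFn_sum g hS, supportFn_sum (-g) hS, ← Finset.sum_add_distrib]
  rfl

end SupportFunction

section PairOfFunctionals

variable {G ι : Type*} [AddCommMonoid G] {g h : G →+ ℤ} {S : Finset G}

theorem eq_supportFn_of_width_eq_zero (hg : width g S = 0) {q : G} (hq : q ∈ S) :
    g q = supportFn g S := by
  have := le_supportFn g hq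
  have := le_supportFn (-g) hq
  simp only [width, AddMonoidHom.neg_apply] at *
  omega

theorem eq_singleton_of_width_eq_zero (hinj : ∀ p q, g p = g q → h p = h q → p = q)
    (hS : S.Nonempty) (hg : width g S = 0) (hh : width h S = 0) : ∃ x, S = {x} := by
  obtain ⟨p, hp⟩ := hS
  refine ⟨p, Finset.eq_singleton_iff_unique_mem.2 ⟨hp, fun q hq => hinj q p ?_ ?_⟩⟩
  · rw [eq_supportFn_of_width_eq_zero hg hq, eq_supportFn_of_width_eq_zero hg hp]
  · rw [eq_supportFn_of_width_eq_zero hh hq, eq_supportFn_of_width_eq_zero hh hp]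

theorem two_dvd_width_face (hgh : ∀ p, g p ≡ h p [ZMOD 2]) (hS : S.Nonempty) :
    2 ∣ width h (face g S) := by
  obtain ⟨p, hp, hpmax⟩ := exists_eq_supportFn h (face_nonempty g hS)
  obtain ⟨q, hq, hqmax⟩ := exists_eq_supportFn (-h) (face_nonempty g hS)
  have hgpq : g p = g q := ((mem_face g).1 hp).2.trans ((mem_face g).1 hq).2.symm
  have hp2 := hgh p
  have hq2 := hgh q
  rw [width, ← hpmax, ← hqmax, AddMonoidHom.neg_apply]
  unfold Int.ModEq at hp2 hq2
  omega

variable [DecidableEq G]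

theorem eq_pair_of_width (hinj : ∀ p q, g p = g q → h p = h q → p = q)
    (hgh : ∀ p, g p ≡ h p [ZMOD 2]) {w : G} (hgw : g w = 2) (hhw : h w = 0)
    (hS : S.Nonempty) (hg : width g S = 2) (hh : width h S = 0) : ∃ p, S = {p, p + w} := by
  obtain ⟨p, hp, hpmin⟩ := exists_eq_supportFn (-g) hS
  obtain ⟨p', hp', hpmax⟩ := exists_eq_supportFn g hS
  have hgp : g (p + w) = g p + 2 := by rw [map_add, hgw]
  have hhp : h (p + w) = h p := by rw [map_add, hhw, add_zero]
  have hhS : ∀ q ∈ S, h q = h p := fun q hq => by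
    rw [eq_supportFn_of_width_eq_zero hh hq, eq_supportFn_of_width_eq_zero hh hp]
  have hgS : ∀ q ∈ S, g p ≤ g q ∧ g q ≤ g p + 2 := fun q hq => by
    have := le_supportFn g hq
    have := le_supportFn (-g) hq
    simp only [width, AddMonoidHom.neg_apply] at *
    omega
  have hgp' : g p' = g p + 2 := by
    rw [width, ← hpmax, ← hpmin, AddMonoidHom.neg_apply] at hg
    omega
  have hpw : p + w = p' := hinj _ _ (by rw [hgp, hgp']) (by rw [hhp, hhS p' hp'])
  refine ⟨p, Finset.ext fun q => ⟨fun hq => ?_, ?_⟩⟩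
  · have hpar : g q ≡ g p [ZMOD 2] := (hgh q).trans ((hhS q hq).symm ▸ (hgh p).symm)
    have := hgS q hq
    unfold Int.ModEq at hpar
    rw [Finset.mem_insert, Finset.mem_singleton]
    by_cases hq' : g q = g p
    · exact Or.inl (hinj q p hq' (hhS q hq))
    · exact Or.inr (hinj q (p + w) (by omega) (by rw [hhp, hhS q hq]))
  · rw [Finset.mem_insert, Finset.mem_singleton]
    rintro (rfl | rfl)
    exacts [hp, hpw ▸ hp']

theorem width_face_eq_of_sum {s : Finset ι} {S : ι → Finset G} (hS : ∀ k ∈ s, (S k).Nonempty)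
    (hface : width h (face g (∑ k ∈ s, S k)) = width h (∑ k ∈ s, S k)) :
    ∀ k ∈ s, width h (face g (S k)) = width h (S k) := by
  have hfS : ∀ k ∈ s, (face g (S k)).Nonempty := fun k hk => face_nonempty g (hS k hk)
  rw [face_sum g hS, width_sum h hfS, width_sum h hS] at hface
  exact (Finset.sum_eq_sum_iff_of_le fun k hk => width_mono h (hfS k hk) (face_subset g)).1 hface

theorem two_dvd_width_of_sum (hgh : ∀ p, g p ≡ h p [ZMOD 2]) {s : Finset ι} {S : ι → Finset G}
    (hS : ∀ k ∈ s, (S k).Nonempty)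
    (hface : width h (face g (∑ k ∈ s, S k)) = width h (∑ k ∈ s, S k)) :
    ∀ k ∈ s, 2 ∣ width h (S k) := fun k hk =>
  width_face_eq_of_sum hS hface k hk ▸ two_dvd_width_face hgh (hS k hk)

end PairOfFunctionals

section LatticePlane

def lin (c d : ℤ) : ℤ × ℤ →+ ℤ := c • AddMonoidHom.fst ℤ ℤ + d • AddMonoidHom.snd ℤ ℤ

@[simp]
theorem lin_apply (c d : ℤ) (p : ℤ × ℤ) : lin c d p = c * p.1 + d * p.2 := by
  simp [lin]

theorem neg_lin (c d : ℤ) : -lin c d = lin (-c) (-d) := by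
  refine AddMonoidHom.ext fun p => ?_
  simp only [AddMonoidHom.neg_apply, lin_apply]
  ring

theorem lin_diag_injective (p q : ℤ × ℤ) (hu : lin 1 1 p = lin 1 1 q)
    (hv : lin 1 (-1) p = lin 1 (-1) q) : p = q := by
  simp only [lin_apply] at hu hv
  ext <;> omega

theorem lin_diag_modEq (p : ℤ × ℤ) : lin 1 1 p ≡ lin 1 (-1) p [ZMOD 2] := by
  simp only [lin_apply, Int.ModEq]
  omega

def toRAddMonoidHom : ℤ × ℤ →+ V :=
  (Int.castAddHom ℝ).prodMap (Int.castAddHom ℝ)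

theorem coe_toRAddMonoidHom : ⇑toRAddMonoidHom = toR := rfl

theorem convexHull_image_toR_sum {ι : Type*} (s : Finset ι) (S : ι → Finset (ℤ × ℤ)) :
    convexHull ℝ (toR '' ↑(∑ k ∈ s, S k)) = ∑ k ∈ s, convexHull ℝ (toR '' ↑(S k)) := by
  rw [Finset.coe_sum, ← coe_toRAddMonoidHom, Set.image_finsetSum, convexHull_sum]

theorem convexHull_image_toR_pair (p w : ℤ × ℤ) :
    convexHull ℝ (toR '' ↑({p, p + w} : Finset (ℤ × ℤ))) = segment ℝ (toR p) (toR p + toR w) := by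
  rw [Finset.coe_pair, Set.image_pair, ← coe_toRAddMonoidHom, map_add, convexHull_pair]

theorem lin_le_of_mem_convexHull {c d M : ℤ} {A : Set (ℤ × ℤ)} (hA : ∀ p ∈ A, lin c d p ≤ M)
    {q : ℤ × ℤ} (hq : toR q ∈ convexHull ℝ (toR '' A)) : lin c d q ≤ M := by
  let φ : V →ₗ[ℝ] ℝ := (c : ℝ) • LinearMap.fst ℝ ℝ ℝ + (d : ℝ) • LinearMap.snd ℝ ℝ ℝ
  have hφ : ∀ p, φ (toR p) = lin c d p := fun p => by simp [φ, toR]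
  have hsub : toR '' A ⊆ {x | φ x ≤ M} := by
    rintro _ ⟨p, hp, rfl⟩
    simpa only [Set.mem_ofPred_eq, hφ, Int.cast_le] using hA p hp
  simpa only [Set.mem_ofPred_eq, hφ, Int.cast_le] using
    convexHull_min hsub (convex_halfSpace_le φ.isLinear (M : ℝ)) hq

theorem exists_lin_eq_of_convexHull_eq {A B : Finset (ℤ × ℤ)}
    (hAB : convexHull ℝ (toR '' ↑A) = convexHull ℝ (toR '' ↑B)) (hA : A.Nonempty)
    {c d : ℤ} {e : ℤ × ℤ} (he : e ∈ B) (hmax : ∀ q ∈ B, lin c d q ≤ lin c d e) :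
    ∃ p ∈ A, lin c d p = lin c d e := by
  obtain ⟨p, hp, hpmax⟩ := A.exists_max_image (lin c d) hA
  refine ⟨p, hp, le_antisymm ?_ ?_⟩
  · exact lin_le_of_mem_convexHull hmax (hAB ▸ subset_convexHull ℝ _ ⟨p, hp, rfl⟩)
  · exact lin_le_of_mem_convexHull hpmax (hAB ▸ subset_convexHull ℝ _ ⟨e, he, rfl⟩)

end LatticePlane

section Square

def squareVertices : Finset (ℤ × ℤ) := {(1, 0), (0, 1), (-1, 0), (0, -1)}

theorem sq18_eq_convexHull : sq18 = convexHull ℝ (toR '' ↑squareVertices) := by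
  simp only [sq18, squareVertices, Finset.coe_insert, Finset.coe_singleton, Set.image_insert_eq,
    Set.image_singleton, toR]
  norm_num

theorem sq18_eq_seg18a_add_seg18b : sq18 = seg18a + seg18b := by
  rw [sq18, seg18a, seg18b, ← convexHull_pair, ← convexHull_pair, ← convexHull_add]
  congr 1
  ext x
  simp only [Set.mem_add, Set.mem_insert_iff, Set.mem_singleton_iff]
  constructor
  · rintro (rfl | rfl | rfl | rfl)
    · exact ⟨(1, 1), Or.inr rfl, (0, -1), Or.inl rfl, by norm_num⟩
    · exact ⟨(1, 1), Or.inr rfl, (-1, 0), Or.inr rfl, by norm_num⟩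
    · exact ⟨(0, 0), Or.inl rfl, (-1, 0), Or.inr rfl, by norm_num⟩
    · exact ⟨(0, 0), Or.inl rfl, (0, -1), Or.inl rfl, by norm_num⟩
  · rintro ⟨a, (rfl | rfl), b, (rfl | rfl), rfl⟩ <;> norm_num

variable {T : Finset (ℤ × ℤ)}

theorem lin_le_one_of_convexHull_eq_sq18 (hT : convexHull ℝ (toR '' ↑T) = sq18) {c d : ℤ}
    (hc : |c| ≤ 1) (hd : |d| ≤ 1) {p : ℤ × ℤ} (hp : p ∈ T) : lin c d p ≤ 1 := by
  have hpsq : toR p ∈ convexHull ℝ (toR '' ↑squareVertices) := by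
    rw [← sq18_eq_convexHull, ← hT]
    exact subset_convexHull ℝ _ ⟨p, hp, rfl⟩
  refine lin_le_of_mem_convexHull (fun q hq => ?_) hpsq
  rw [abs_le] at hc hd
  simp only [squareVertices, Finset.coe_insert, Finset.coe_singleton, Set.mem_insert_iff,
    Set.mem_singleton_iff] at hq
  rcases hq with rfl | rfl | rfl | rfl <;> simp only [lin_apply] <;> omega

theorem squareVertices_subset (hT : convexHull ℝ (toR '' ↑T) = sq18) (hne : T.Nonempty) :
    squareVertices ⊆ T := by
  intro e he
  have hmax : ∀ q ∈ squareVertices, lin e.1 e.2 q ≤ lin e.1 e.2 e := fun q hq => by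
    simp only [squareVertices, Finset.mem_insert, Finset.mem_singleton] at he hq
    rcases he with rfl | rfl | rfl | rfl <;> rcases hq with rfl | rfl | rfl | rfl <;> simp
  obtain ⟨p, hp, hpe⟩ := exists_lin_eq_of_convexHull_eq (hT.trans sq18_eq_convexHull) hne he hmax
  simp only [squareVertices, Finset.mem_insert, Finset.mem_singleton] at he
  have h₁ := lin_le_one_of_convexHull_eq_sq18 hT (c := 1) (d := 1) (by simp) (by simp) hp
  have h₂ := lin_le_one_of_convexHull_eq_sq18 hT (c := 1) (d := -1) (by simp) (by simp) hp
  have h₃ := lin_le_one_of_convexHull_eq_sq18 hT (c := -1) (d := 1) (by simp) (by simp) hp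
  have h₄ := lin_le_one_of_convexHull_eq_sq18 hT (c := -1) (d := -1) (by simp) (by simp) hp
  simp only [lin_apply] at hpe h₁ h₂ h₃ h₄
  convert hp using 1
  rcases he with rfl | rfl | rfl | rfl <;> rw [Prod.ext_iff] <;> dsimp only at hpe ⊢ <;> omega

theorem supportFn_lin_of_convexHull_eq_sq18 (hT : convexHull ℝ (toR '' ↑T) = sq18)
    (hne : T.Nonempty) {c d : ℤ} (hc : c = 1 ∨ c = -1) (hd : |d| ≤ 1) :
    supportFn (lin c d) T = 1 := by
  refine le_antisymm (supportFn_le _ hne fun p hp => lin_le_one_of_convexHull_eq_sq18 hT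
    (by rcases hc with rfl | rfl <;> simp) hd hp) ?_
  have hc0 : (c, 0) ∈ T := squareVertices_subset hT hne (by
    rcases hc with rfl | rfl <;> simp [squareVertices])
  have := le_supportFn (lin c d) hc0
  rcases hc with rfl | rfl <;> simpa using this

theorem width_lin_of_convexHull_eq_sq18 (hT : convexHull ℝ (toR '' ↑T) = sq18)
    (hne : T.Nonempty) {d : ℤ} (hd : d = 1 ∨ d = -1) : width (lin 1 d) T = 2 := by
  have hd' : |d| ≤ 1 := by rcases hd with rfl | rfl <;> simp
  rw [width, neg_lin, supportFn_lin_of_convexHull_eq_sq18 hT hne (.inl rfl) hd',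
    supportFn_lin_of_convexHull_eq_sq18 hT hne (.inr rfl) (by rwa [abs_neg])]
  rfl

theorem width_face_of_convexHull_eq_sq18 (hT : convexHull ℝ (toR '' ↑T) = sq18)
    (hne : T.Nonempty) {d : ℤ} (hd : d = 1 ∨ d = -1) :
    width (lin 1 (-d)) (face (lin 1 d) T) = width (lin 1 (-d)) T := by
  have hd' : -d = 1 ∨ -d = -1 := by omega
  refine le_antisymm (width_mono _ (face_nonempty _ hne) (face_subset _)) ?_
  have hmem : ∀ e ∈ squareVertices, lin 1 d e = 1 → e ∈ face (lin 1 d) T := fun e he he1 =>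
    (mem_face _).2 ⟨squareVertices_subset hT hne he,
      by rw [he1, supportFn_lin_of_convexHull_eq_sq18 hT hne (.inl rfl) (by
        rcases hd with rfl | rfl <;> simp)]⟩
  rw [width_lin_of_convexHull_eq_sq18 hT hne hd']
  rcases hd with rfl | rfl
  · simpa using sub_le_width (lin 1 (-1)) (hmem (1, 0) (by simp [squareVertices]) (by simp))
      (hmem (0, 1) (by simp [squareVertices]) (by simp))
  · simpa using sub_le_width (lin 1 1) (hmem (1, 0) (by simp [squareVertices]) (by simp))
      (hmem (0, -1) (by simp [squareVertices]) (by simp))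

end Square

section Decomposition

theorem widths_of_sum_eq_sq18 {ι : Type*} [Fintype ι] {S : ι → Finset (ℤ × ℤ)}
    (hS : ∀ k, (S k).Nonempty) (hT : convexHull ℝ (toR '' ↑(∑ k, S k)) = sq18) :
    ∑ k, width (lin 1 1) (S k) = 2 ∧ ∑ k, width (lin 1 (-1)) (S k) = 2 ∧
      ∀ k, 2 ∣ width (lin 1 1) (S k) ∧ 2 ∣ width (lin 1 (-1)) (S k) := by
  have hS' : ∀ k ∈ Finset.univ, (S k).Nonempty := fun k _ => hS k
  have hne := sum_nonempty hS'
  refine ⟨?_, ?_, fun k => ⟨?_, ?_⟩⟩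
  · rw [← width_sum _ hS', width_lin_of_convexHull_eq_sq18 hT hne (.inl rfl)]
  · rw [← width_sum _ hS', width_lin_of_convexHull_eq_sq18 hT hne (.inr rfl)]
  · refine two_dvd_width_of_sum (fun p => (lin_diag_modEq p).symm) hS' ?_ k (Finset.mem_univ k)
    simpa using width_face_of_convexHull_eq_sq18 hT hne (.inr rfl)
  · exact two_dvd_width_of_sum lin_diag_modEq hS'
      (width_face_of_convexHull_eq_sq18 hT hne (.inl rfl)) k (Finset.mem_univ k)

variable {S : Finset (ℤ × ℤ)}

theorem exists_convexHull_eq_singleton (hS : S.Nonempty) (hu : width (lin 1 1) S = 0)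
    (hv : width (lin 1 (-1)) S = 0) : ∃ x, convexHull ℝ (toR '' ↑S) = {x} := by
  obtain ⟨p, rfl⟩ := eq_singleton_of_width_eq_zero lin_diag_injective hS hu hv
  exact ⟨toR p, by simp⟩

theorem exists_convexHull_eq_vadd_seg18a (hS : S.Nonempty) (hu : width (lin 1 1) S = 2)
    (hv : width (lin 1 (-1)) S = 0) : ∃ t : V, convexHull ℝ (toR '' ↑S) = t +ᵥ seg18a := by
  obtain ⟨p, rfl⟩ := eq_pair_of_width lin_diag_injective lin_diag_modEq (w := (1, 1))
    (by simp) (by simp) hS hu hv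
  refine ⟨toR p, ?_⟩
  rw [convexHull_image_toR_pair, seg18a, vadd_segment]
  simp [toR]

theorem exists_convexHull_eq_vadd_seg18b (hS : S.Nonempty) (hu : width (lin 1 1) S = 0)
    (hv : width (lin 1 (-1)) S = 2) : ∃ t : V, convexHull ℝ (toR '' ↑S) = t +ᵥ seg18b := by
  obtain ⟨p, rfl⟩ := eq_pair_of_width (fun p q hv hu => lin_diag_injective p q hu hv)
    (fun p => (lin_diag_modEq p).symm) (w := (1, -1)) (by simp) (by simp) hS hv hu
  refine ⟨toR p + (1, 0), ?_⟩
  rw [convexHull_image_toR_pair, seg18b, vadd_segment, segment_symm]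
  congr 1 <;> ext <;> simp [toR]

theorem two_le_width_add_width (hS : S.Nonempty)
    (hpt : ¬∃ x, convexHull ℝ (toR '' ↑S) = {x}) (hu : 2 ∣ width (lin 1 1) S)
    (hv : 2 ∣ width (lin 1 (-1)) S) : 2 ≤ width (lin 1 1) S + width (lin 1 (-1)) S := by
  have := width_nonneg (lin 1 1) hS
  have := width_nonneg (lin 1 (-1)) hS
  by_contra hlt
  exact hpt (exists_convexHull_eq_singleton hS (by omega) (by omega))

end Decomposition

theorem exists_equiv_fin_two (P : Fin 2 → Prop) (h : P 0 ↔ ¬ P 1) :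
    ∃ σ : Fin 2 ≃ Fin 2, ∀ k, σ k = 0 ↔ P k := by
  by_cases h0 : P 0
  · exact ⟨Equiv.refl _, Fin.forall_fin_two.2 ⟨by simpa using h0, by simpa using h.1 h0⟩⟩
  · exact ⟨Equiv.swap 0 1,
      Fin.forall_fin_two.2 ⟨by simpa using h0, by simpa using not_not.1 (mt h.2 h0)⟩⟩

/-- `Q₁ = conv{(0,0),(1,1)} + conv{(0,−1),(−1,0)}`, and up to translating
and reordering the summands this is the unique Minkowski decomposition of `Q₁` into
lattice polytopes none of which is a single point. -/
theorem statement18 :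
    sq18 = seg18a + seg18b ∧
    ∀ (m : ℕ) (Ps : Fin (m + 1) → Set V), 1 ≤ m →
      sq18 = ∑ k, Ps k →
      (∀ k, IsLatticePolytope (Ps k)) →
      (∀ k, ¬ ∃ x, Ps k = {x}) →
      ∃ σ : Fin (m + 1) ≃ Fin 2, ∀ k, ∃ t : V,
        Ps k = t +ᵥ (if σ k = 0 then seg18a else seg18b) := by
  refine ⟨sq18_eq_seg18a_add_seg18b, fun m Ps hm hsum hlat hnp => ?_⟩
  choose S hSne hSeq using hlat
  have hT : convexHull ℝ (toR '' ↑(∑ k, S k)) = sq18 := by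
    rw [convexHull_image_toR_sum, hsum]
    exact Finset.sum_congr rfl fun k _ => (hSeq k).symm
  obtain ⟨hsu, hsv, heven⟩ := widths_of_sum_eq_sq18 hSne hT
  have hpos : ∀ k, 2 ≤ width (lin 1 1) (S k) + width (lin 1 (-1)) (S k) := fun k =>
    two_le_width_add_width (hSne k) (hSeq k ▸ hnp k) (heven k).1 (heven k).2
  obtain rfl : m = 1 := by
    have := Finset.card_nsmul_le_sum Finset.univ _ 2 fun k _ => hpos k
    rw [Finset.sum_add_distrib, hsu, hsv, Finset.card_univ, Fintype.card_fin, nsmul_eq_mul] at this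
    push_cast at this
    omega
  rw [Fin.sum_univ_two] at hsu hsv
  have hcases : ∀ k, (width (lin 1 1) (S k) = 2 ∧ width (lin 1 (-1)) (S k) = 0) ∨
      (width (lin 1 1) (S k) = 0 ∧ width (lin 1 (-1)) (S k) = 2) := by
    have hu := fun k => width_nonneg (lin 1 1) (hSne k)
    have hv := fun k => width_nonneg (lin 1 (-1)) (hSne k)
    have := hpos 0; have := hpos 1; have := heven 0; have := heven 1
    have := hu 0; have := hu 1; have := hv 0; have := hv 1
    exact Fin.forall_fin_two.2 ⟨by omega, by omega⟩
  obtain ⟨σ, hσ⟩ := exists_equiv_fin_two (fun k => width (lin 1 1) (S k) = 2) (by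
    rcases hcases 0 with h0 | h0 <;> rcases hcases 1 with h1 | h1 <;> omega)
  refine ⟨σ, fun k => ?_⟩
  rw [hSeq k]
  rcases hcases k with ⟨hu, hv⟩ | ⟨hu, hv⟩
  · rw [if_pos ((hσ k).2 hu)]
    exact exists_convexHull_eq_vadd_seg18a (hSne k) hu hv
  · rw [if_neg fun h => by have := (hσ k).1 h; omega]
    exact exists_convexHull_eq_vadd_seg18b (hSne k) hu hv
end
end
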